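/- Let I be a finite index set, d ≥ 1, and let n > 0, k > 0 and, for all i, j ∈ I, N_i > 0 and N_{ij} > 0 be real numbers. Fix vectors z̃_j ∈ ℝ^d for j ∈ I, and for Z = (z_i)_{i∈I} ∈ (ℝ^d)^I define ℓ(Z) = −Σ_{i,j∈I} [ N_{ij}·log σ(⟨z_i, z̃_j⟩) + (k/n)·N_i·N_j·log σ(−⟨z_i, z̃_j⟩) ]. Define R̃_{ij} = log( n·N_{ij} / (k·N_i·N_j) ) and m_{ij} = N_{ij} + (k/n)·N_i·N_j. Then ℓ is differentiable in z_i and its gradient with respect to z_i satisfies ∇_{z_i} ℓ(Z) = Σ_{j∈I} m_{ij} · ( σ(⟨z_i, z̃_j⟩) − σ(R̃_{ij}) ) · z̃_j; in particular the gradient is a weighted sum of the context vectors z̃_j, weighted by the sigmoid-space error between the model prediction σ(⟨z_i, z̃_j⟩) and the target σ(R̃_{ij}). -/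

import Mathlib

/-!
Only the summands of `ℓ` with first index `i` depend on `z_i`, and the `j`-th of them is
`a log σ t + b log σ (-t)` at `t = ⟪z_i, z̃_j⟫`, with `a = N_ij` and `b = (k/n) N_i N_j`.
Since `σ' = σ (1 - σ)`, this has derivative `a - (a + b) σ t`, and
`a = (a + b) σ (log (a / b))` because `σ (log (a / b)) = a / (a + b)`; here
`a + b = m_ij` and `log (a / b) = R̃_ij`.
The chain rule through `z ↦ ⟪z, z̃_j⟫`, whose gradient is `z̃_j`, gives the claim.
-/

open Finset

noncomputable def sigmoid (x : ℝ) : ℝ := 1 / (1 + Real.exp (-x))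

lemma sigmoid_eq_real_sigmoid : sigmoid = Real.sigmoid :=
  funext fun _ => one_div _

namespace Real

lemma sigmoid_log_div {a b : ℝ} (ha : 0 < a) (hb : 0 < b) :
    sigmoid (log (a / b)) = a / (a + b) := by
  rw [sigmoid_def, ← log_inv, exp_log (by positivity)]
  field_simp

lemma hasDerivAt_log_sigmoid (t : ℝ) :
    HasDerivAt (fun s => log (sigmoid s)) (1 - sigmoid t) t := by
  convert (hasDerivAt_sigmoid t).log (sigmoid_pos t).ne' using 1
  field_simp [(sigmoid_pos t).ne']

lemma hasDerivAt_log_sigmoid_neg (t : ℝ) :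
    HasDerivAt (fun s => log (sigmoid (-s))) (-sigmoid t) t :=
  ((hasDerivAt_log_sigmoid (-t)).comp t (hasDerivAt_neg t)).congr_deriv <| by
    rw [sigmoid_neg]; ring

lemma hasDerivAt_logLikelihood {a b : ℝ} (ha : 0 < a) (hb : 0 < b) (t : ℝ) :
    HasDerivAt (fun s => a * log (sigmoid s) + b * log (sigmoid (-s)))
      (-((a + b) * (sigmoid t - sigmoid (log (a / b))))) t := by
  refine (((hasDerivAt_log_sigmoid t).const_mul a).add
    ((hasDerivAt_log_sigmoid_neg t).const_mul b)).congr_deriv ?_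
  rw [sigmoid_log_div ha hb]
  field_simp
  ring

end Real

section Gradient

variable {F : Type*} [NormedAddCommGroup F] [InnerProductSpace ℝ F] [CompleteSpace F]
  {f : F → ℝ} {f' x : F}

lemma HasGradientAt.neg (h : HasGradientAt f f' x) : HasGradientAt (fun z => -f z) (-f') x := by
  rw [hasGradientAt_iff_hasFDerivAt, map_neg]
  exact h.hasFDerivAt.neg

lemma HasGradientAt.add_const (h : HasGradientAt f f' x) (c : ℝ) :
    HasGradientAt (fun z => f z + c) f' x :=
  h.hasFDerivAt.add_const c

lemma HasGradientAt.fun_sum {ι : Type*} {u : Finset ι} {g : ι → F → ℝ} {g' : ι → F}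
    (h : ∀ j ∈ u, HasGradientAt (g j) (g' j) x) :
    HasGradientAt (fun z => ∑ j ∈ u, g j z) (∑ j ∈ u, g' j) x := by
  rw [hasGradientAt_iff_hasFDerivAt, map_sum]
  exact HasFDerivAt.fun_sum fun j hj => (h j hj).hasFDerivAt

lemma hasGradientAt_comp_inner {φ : ℝ → ℝ} {φ' : ℝ} {v : F}
    (h : HasDerivAt φ φ' (inner ℝ x v)) :
    HasGradientAt (fun z => φ (inner ℝ z v)) (φ' • v) x := by
  have hinner : HasFDerivAt (fun z : F => inner ℝ z v) (innerSL ℝ v) x :=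
    ((innerSL ℝ v).hasFDerivAt).congr_of_eventuallyEq
      (Filter.Eventually.of_forall fun z => real_inner_comm v z)
  rw [hasGradientAt_iff_hasFDerivAt, map_smul]
  refine (h.comp_hasFDerivAt x hinner).congr_fderiv ?_
  ext z
  simp

end Gradient

lemma Finset.sum_apply_update {ι α M : Type*} [Fintype ι] [DecidableEq ι] [AddCommMonoid M]
    (g : ι → α → M) (Z : ι → α) (i : ι) (z : α) :
    ∑ j, g j (Function.update Z i z j) = g i z + ∑ j ∈ univ \ {i}, g j (Z j) := by
  simp_rw [Function.apply_update g]
  exact sum_update_of_mem (mem_univ i) _ _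

theorem sgns_gradient_general
    {I : Type*} [Fintype I] [DecidableEq I] {d : ℕ}
    (n k : ℝ) (hn : 0 < n) (hk : 0 < k)
    (N : I → ℝ) (Nij : I → I → ℝ)
    (hN : ∀ i, 0 < N i) (hNij : ∀ i j, 0 < Nij i j)
    (zt : I → EuclideanSpace ℝ (Fin d))
    (ℓ : (I → EuclideanSpace ℝ (Fin d)) → ℝ)
    (hℓ : ∀ Z : I → EuclideanSpace ℝ (Fin d), ℓ Z =
      -∑ i, ∑ j, (Nij i j * Real.log (sigmoid (inner ℝ (Z i) (zt j) : ℝ))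
        + (k / n) * N i * N j * Real.log (sigmoid (-(inner ℝ (Z i) (zt j) : ℝ)))))
    (R : I → I → ℝ)
    (hR : ∀ i j, R i j = Real.log (n * Nij i j / (k * N i * N j)))
    (m : I → I → ℝ)
    (hm : ∀ i j, m i j = Nij i j + (k / n) * N i * N j)
    (Z : I → EuclideanSpace ℝ (Fin d)) (i : I) :
    HasGradientAt (fun z : EuclideanSpace ℝ (Fin d) => ℓ (Function.update Z i z))
      (∑ j, (m i j * (sigmoid (inner ℝ (Z i) (zt j) : ℝ) - sigmoid (R i j))) • zt j)
      (Z i) := by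
  set g : I → EuclideanSpace ℝ (Fin d) → ℝ := fun i' w => ∑ j,
    (Nij i' j * Real.log (sigmoid (inner ℝ w (zt j))) +
      (k / n) * N i' * N j * Real.log (sigmoid (-inner ℝ w (zt j))))
  have hsplit : ∀ z,
      ℓ (Function.update Z i z) = -(g i z + ∑ i' ∈ univ \ {i}, g i' (Z i')) :=
    fun z => by rw [hℓ, ← sum_apply_update]
  have hR' : ∀ j, R i j = Real.log (Nij i j / (k / n * N i * N j)) := fun j => by
    rw [hR]; congr 1; field_simp
  have hg : HasGradientAt (g i)
      (-∑ j, (m i j * (sigmoid (inner ℝ (Z i) (zt j)) - sigmoid (R i j))) • zt j) (Z i) := by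
    simp only [← sum_neg_distrib, ← neg_smul, g]
    refine HasGradientAt.fun_sum fun j _ => ?_
    rw [hm, hR', sigmoid_eq_real_sigmoid]
    exact hasGradientAt_comp_inner (Real.hasDerivAt_logLikelihood (hNij i j)
      (by have := hN i; have := hN j; positivity) (inner ℝ (Z i) (zt j)))
  simp_rw [hsplit]
  simpa only [neg_neg] using (hg.add_const _).neg

/-- The gradient of the SGNS objective with respect to the embedding `z_i` is a
weighted sum of the context vectors `z̃_j`, weighted by the sigmoid-space error
between the model prediction `σ⟨z_i, z̃_j⟩` and the target `σ(R̃_{ij})`. -/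
theorem sgns_gradient
    {I : Type*} [Fintype I] [DecidableEq I] {d : ℕ} (hd : 1 ≤ d)
    (n k : ℝ) (hn : 0 < n) (hk : 0 < k)
    (N : I → ℝ) (Nij : I → I → ℝ)
    (hN : ∀ i, 0 < N i) (hNij : ∀ i j, 0 < Nij i j)
    (zt : I → EuclideanSpace ℝ (Fin d))
    (ℓ : (I → EuclideanSpace ℝ (Fin d)) → ℝ)
    (hℓ : ∀ Z : I → EuclideanSpace ℝ (Fin d), ℓ Z =
      -∑ i, ∑ j, (Nij i j * Real.log (sigmoid (inner ℝ (Z i) (zt j) : ℝ))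
        + (k / n) * N i * N j * Real.log (sigmoid (-(inner ℝ (Z i) (zt j) : ℝ)))))
    (R : I → I → ℝ)
    (hR : ∀ i j, R i j = Real.log (n * Nij i j / (k * N i * N j)))
    (m : I → I → ℝ)
    (hm : ∀ i j, m i j = Nij i j + (k / n) * N i * N j)
    (Z : I → EuclideanSpace ℝ (Fin d)) (i : I) :
    HasGradientAt (fun z : EuclideanSpace ℝ (Fin d) => ℓ (Function.update Z i z))
      (∑ j, (m i j * (sigmoid (inner ℝ (Z i) (zt j) : ℝ) - sigmoid (R i j))) • zt j)
      (Z i) :=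
  sgns_gradient_general n k hn hk N Nij hN hNij zt ℓ hℓ R hR m hm Z i
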